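/- Let (x^k) be a proximal gradient sequence whose stepsizes are generated by the short-BB-safeguarded update γ_{k+1} = min{ γ_k √(1 + γ_k/γ_{k−1}), γ_k / √(2 [γ_k² L_k² − γ_k ℓ_k]_+), 1/c_k }, and let k ≥ 1 be such that ⟨y^k, s^k⟩ > 0. Then at least one of the following holds: γ_{k+1} ≥ γ_k; or γ_k ≥ 2/c_k; or γ_k ≥ γ_{k+1} = 1/c_k. -/

import Mathlib

open scoped RealInnerProductSpace BigOperators
open Filter

noncomputable section

/-- Euclidean space `ℝ^n`. -/
abbrev En (n : ℕ) : Type := EuclideanSpace ℝ (Fin n)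

/-- Convexity for an extended-real-valued function. -/
def ERConvex {n : ℕ} (g : En n → EReal) : Prop :=
  ∀ x y : En n, ∀ a b : ℝ, 0 ≤ a → 0 ≤ b → a + b = 1 →
    g (a • x + b • y) ≤ (a : EReal) * g x + (b : EReal) * g y

/-- Properness for an extended-real-valued function: nowhere `⊥`, somewhere finite. -/
def ERProper {n : ℕ} (g : En n → EReal) : Prop :=
  (∀ x, g x ≠ ⊥) ∧ (∃ x, g x ≠ ⊤)

/-- `p = prox_{γ g}(u)`: `p` minimizes `w ↦ g w + 1/(2γ)‖w − u‖²`. -/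
def IsProx {n : ℕ} (g : En n → EReal) (γ : ℝ) (u p : En n) : Prop :=
  ∀ w : En n,
    g p + ((1 / (2 * γ) * ‖p - u‖ ^ 2 : ℝ) : EReal)
      ≤ g w + ((1 / (2 * γ) * ‖w - u‖ ^ 2 : ℝ) : EReal)

/-- The composite objective `φ = f + g`. -/
def phi {n : ℕ} (f : En n → ℝ) (g : En n → EReal) (z : En n) : EReal :=
  (f z : EReal) + g z

/-- `p` is a minimizer of `φ = f + g`. -/
def IsArgmin {n : ℕ} (f : En n → ℝ) (g : En n → EReal) (p : En n) : Prop :=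
  ∀ z : En n, phi f g p ≤ phi f g z

/-- `(x^k)` is a proximal gradient sequence with stepsizes `(γ_k)` and gradient `f'`. -/
def PGSeq {n : ℕ} (f' : En n → En n) (g : En n → EReal)
    (γ : ℕ → ℝ) (x : ℕ → En n) : Prop :=
  ∀ k : ℕ, IsProx g (γ (k + 1)) (x k - γ (k + 1) • f' (x k)) (x (k + 1))

/-- `s^k = x^k − x^{k−1}`. -/
def sk {n : ℕ} (x : ℕ → En n) (k : ℕ) : En n := x k - x (k - 1)

/-- `y^k = ∇f(x^k) − ∇f(x^{k−1})`. -/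
def yk {n : ℕ} (f' : En n → En n) (x : ℕ → En n) (k : ℕ) : En n :=
  f' (x k) - f' (x (k - 1))

/-- `ℓ_k = ⟨y^k, s^k⟩ / ‖s^k‖²`. -/
def ellk {n : ℕ} (f' : En n → En n) (x : ℕ → En n) (k : ℕ) : ℝ :=
  ⟪yk f' x k, sk x k⟫ / ‖sk x k‖ ^ 2

/-- `L_k = ‖y^k‖ / ‖s^k‖`. -/
def Lk {n : ℕ} (f' : En n → En n) (x : ℕ → En n) (k : ℕ) : ℝ :=
  ‖yk f' x k‖ / ‖sk x k‖

/-- `c_k = ‖y^k‖² / ⟨y^k, s^k⟩`. -/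
def ck {n : ℕ} (f' : En n → En n) (x : ℕ → En n) (k : ℕ) : ℝ :=
  ‖yk f' x k‖ ^ 2 / ⟪yk f' x k, sk x k⟫

/-- `P_k = φ(x^k) − min φ`, as a real number (`x*` a minimizer of `φ`). -/
def Pk {n : ℕ} (f : En n → ℝ) (g : En n → EReal) (xstar : En n)
    (x : ℕ → En n) (k : ℕ) : ℝ :=
  (phi f g (x k)).toReal - (phi f g xstar).toReal

/-- `P_k^min = min_{i ≤ k} P_i`. -/
def PkMin {n : ℕ} (f : En n → ℝ) (g : En n → EReal) (xstar : En n)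
    (x : ℕ → En n) (k : ℕ) : ℝ :=
  (Finset.range (k + 1)).inf' Finset.nonempty_range_add_one (Pk f g xstar x)

/-- `U_k^r(x*) = ½‖x^k − x*‖² + ½‖x^k − x^{k−1}‖² + γ_k (1 + r ρ_k) P_{k−1}`. -/
def Uk {n : ℕ} (f : En n → ℝ) (g : En n → EReal) (r : ℝ) (xstar : En n)
    (γ : ℕ → ℝ) (x : ℕ → En n) (k : ℕ) : ℝ :=
  1 / 2 * ‖x k - xstar‖ ^ 2 + 1 / 2 * ‖x k - x (k - 1)‖ ^ 2
    + γ k * (1 + r * (γ k / γ (k - 1))) * Pk f g xstar x (k - 1)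

/-- Property (p1): `1 + r ρ_k − r ρ_{k+1}² ≥ 0` for all `k ≥ 1`. -/
def P1 (γ : ℕ → ℝ) (r : ℝ) : Prop :=
  ∀ k : ℕ, 1 ≤ k →
    0 ≤ 1 + r * (γ k / γ (k - 1)) - r * (γ (k + 1) / γ k) ^ 2

/-- Property (p2): `1/2 − ρ_{k+1}² [γ_k² L_k² − (2−r) γ_k ℓ_k + 1 − r] ≥ 0` for all `k ≥ 1`. -/
def P2 {n : ℕ} (f' : En n → En n) (x : ℕ → En n) (γ : ℕ → ℝ) (r : ℝ) : Prop :=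
  ∀ k : ℕ, 1 ≤ k →
    0 ≤ 1 / 2 - (γ (k + 1) / γ k) ^ 2 *
      ((γ k) ^ 2 * (Lk f' x k) ^ 2 - (2 - r) * γ k * ellk f' x k + 1 - r)

/-- Property (p3): for every `k ≥ 1`, either `γ_{k+1} ≥ γ_k` or there is
`1 ≤ j ≤ k` with `min{γ_j, γ_{k+1}} ≥ λ_min ‖x^j − x^{j−1}‖^{1−ν}`. -/
def P3 {n : ℕ} (x : ℕ → En n) (γ : ℕ → ℝ) (ν lammin : ℝ) : Prop :=
  ∀ k : ℕ, 1 ≤ k →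
    γ k ≤ γ (k + 1) ∨
      ∃ j : ℕ, 1 ≤ j ∧ j ≤ k ∧
        lammin * ‖x j - x (j - 1)‖ ^ (1 - ν) ≤ min (γ j) (γ (k + 1))

/-- `L` is a `ν`-Hölder modulus for `f'` on `Ω`. -/
def HolderOn {n : ℕ} (f' : En n → En n) (ν L : ℝ) (Ω : Set (En n)) : Prop :=
  ∀ x ∈ Ω, ∀ y ∈ Ω, ‖f' x - f' y‖ ≤ L * ‖x - y‖ ^ ν

/-- `f'` is locally `ν`-Hölder continuous. -/
def LocallyHolder {n : ℕ} (f' : En n → En n) (ν : ℝ) : Prop :=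
  ∀ Ω : Set (En n), IsCompact Ω → Convex ℝ Ω → ∃ L > 0, HolderOn f' ν L Ω

/-- First term in the adaPG^{r,r/2} stepsize update. -/
def adaT1 (γ : ℕ → ℝ) (r : ℝ) (k : ℕ) : ℝ :=
  γ k * Real.sqrt (1 / r + γ k / γ (k - 1))

/-- The bracket `γ_k² L_k² − (2 − r) γ_k ℓ_k + 1 − r` in the adaPG^{r,r/2} update. -/
def adaBrk {n : ℕ} (f' : En n → En n) (x : ℕ → En n) (γ : ℕ → ℝ) (r : ℝ) (k : ℕ) : ℝ :=
  (γ k) ^ 2 * (Lk f' x k) ^ 2 - (2 - r) * γ k * ellk f' x k + 1 - r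

/-- The adaPG^{r,r/2} stepsize: the minimum of the two terms, the second
being `+∞` (inactive) when the bracket is nonpositive. -/
def adaSafe {n : ℕ} (f' : En n → En n) (x : ℕ → En n) (γ : ℕ → ℝ) (r : ℝ) (k : ℕ) : ℝ :=
  if 0 < adaBrk f' x γ r k then
    min (adaT1 γ r k) (γ k / Real.sqrt (2 * adaBrk f' x γ r k))
  else adaT1 γ r k

/-- The stepsizes are generated by the adaPG^{r,r/2} update (for `k ≥ 1`). -/
def AdaPGUpdate {n : ℕ} (f' : En n → En n) (x : ℕ → En n) (γ : ℕ → ℝ) (r : ℝ) : Prop :=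
  ∀ k : ℕ, 1 ≤ k → γ (k + 1) = adaSafe f' x γ r k

/-- `λ_k = γ_k / ‖x^k − x^{k−1}‖^{1−ν}`. -/
def lamk {n : ℕ} (x : ℕ → En n) (γ : ℕ → ℝ) (ν : ℝ) (k : ℕ) : ℝ :=
  γ k / ‖x k - x (k - 1)‖ ^ (1 - ν)

/-! With `r = 1` and `L_k² = ℓ_k c_k`, the bracket of the safeguard factors as
`γ_k ℓ_k (γ_k c_k − 1)`. If the stepsize shrinks, the first term `γ_k √(1 + γ_k/γ_{k−1}) ≥ γ_k`
cannot be the active one, so `γ_{k+1} = γ_k / √(2 γ_k ℓ_k (γ_k c_k − 1))`. Unless `1/c_k` is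
active, this is at most `1/c_k`, which with `t = γ_k c_k` and `ℓ_k ≤ c_k` gives
`t² ≤ 2 t (t − 1)`, i.e. `t ≥ 2`. -/

section InnerProduct

variable {E : Type*} [NormedAddCommGroup E] [InnerProductSpace ℝ E] {y s : E}

lemma real_inner_div_norm_sq_pos (h : 0 < ⟪y, s⟫) : 0 < ⟪y, s⟫ / ‖s‖ ^ 2 := by
  have hs : s ≠ 0 := by
    rintro rfl
    simp at h
  positivity

lemma norm_sq_div_real_inner_pos (h : 0 < ⟪y, s⟫) : 0 < ‖y‖ ^ 2 / ⟪y, s⟫ := by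
  have hy : y ≠ 0 := by
    rintro rfl
    simp at h
  positivity

lemma real_inner_div_norm_sq_le_norm_sq_div_inner (h : 0 < ⟪y, s⟫) :
    ⟪y, s⟫ / ‖s‖ ^ 2 ≤ ‖y‖ ^ 2 / ⟪y, s⟫ := by
  have hs : 0 < ‖s‖ ^ 2 := (div_pos_iff_of_pos_left h).1 (real_inner_div_norm_sq_pos h)
  have hcs : ⟪y, s⟫ ^ 2 ≤ (‖y‖ * ‖s‖) ^ 2 :=
    pow_le_pow_left₀ h.le (real_inner_le_norm y s) 2
  rw [div_le_div_iff₀ hs h]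
  nlinarith

lemma real_inner_div_norm_sq_mul_norm_sq_div_inner (h : ⟪y, s⟫ ≠ 0) :
    ⟪y, s⟫ / ‖s‖ ^ 2 * (‖y‖ ^ 2 / ⟪y, s⟫) = (‖y‖ / ‖s‖) ^ 2 := by
  rw [div_mul_div_cancel₀' h, div_pow]

end InnerProduct

lemma two_div_le_of_div_sqrt_le {a ℓ c : ℝ} (ha : 0 < a) (hc : 0 < c) (hℓ : 0 ≤ ℓ)
    (hℓc : ℓ ≤ c) (hB : 0 < a * ℓ * (a * c - 1))
    (h : a / √(2 * (a * ℓ * (a * c - 1))) ≤ 1 / c) : 2 / c ≤ a := by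
  have hsqrt : 0 < √(2 * (a * ℓ * (a * c - 1))) := Real.sqrt_pos.2 (by linarith)
  have hac : a * c ≤ √(2 * (a * ℓ * (a * c - 1))) := by
    rw [div_le_div_iff₀ hsqrt hc] at h
    linarith
  have hac1 : 0 < a * c - 1 := pos_of_mul_pos_right hB (by positivity)
  have hsq : (a * c) ^ 2 ≤ 2 * (a * c * (a * c - 1)) :=
    calc (a * c) ^ 2 ≤ √(2 * (a * ℓ * (a * c - 1))) ^ 2 := by gcongr
      _ = 2 * (a * ℓ * (a * c - 1)) := Real.sq_sqrt (by positivity)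
      _ ≤ 2 * (a * c * (a * c - 1)) := by gcongr
  rw [div_le_iff₀ hc]
  nlinarith [mul_pos ha hc]

section Stepsize

variable {n : ℕ} {f' : En n → En n} {x : ℕ → En n} {γ : ℕ → ℝ} {r : ℝ} {k : ℕ}

lemma le_adaT1 (hr : 0 < r) (hr1 : r ≤ 1) (hγk : 0 ≤ γ k) (hγk' : 0 ≤ γ (k - 1)) :
    γ k ≤ adaT1 γ r k :=
  le_mul_of_one_le_right hγk <| Real.one_le_sqrt.2 <|
    le_add_of_le_of_nonneg (one_le_one_div hr hr1) (div_nonneg hγk hγk')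

lemma adaSafe_eq_of_lt_of_le_adaT1 (hT1 : γ k ≤ adaT1 γ r k) (hlt : adaSafe f' x γ r k < γ k) :
    0 < adaBrk f' x γ r k ∧
      adaSafe f' x γ r k = γ k / √(2 * adaBrk f' x γ r k) := by
  unfold adaSafe at hlt ⊢
  split_ifs at hlt ⊢ with hB
  · refine ⟨hB, (min_choice _ _).resolve_left fun hmin => ?_⟩
    rw [hmin] at hlt
    exact hlt.not_ge hT1
  · exact absurd hlt hT1.not_gt

lemma adaBrk_one_eq (h : ⟪yk f' x k, sk x k⟫ ≠ 0) :
    adaBrk f' x γ 1 k = γ k * ellk f' x k * (γ k * ck f' x k - 1) := by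
  have hL : Lk f' x k ^ 2 = ellk f' x k * ck f' x k :=
    (real_inner_div_norm_sq_mul_norm_sq_div_inner h).symm
  rw [adaBrk, hL]
  ring

end Stepsize

theorem statement_16_general {n : ℕ} (f' : En n → En n)
    (γ : ℕ → ℝ) (hγ : ∀ k, 0 < γ k)
    (x : ℕ → En n)
    (hupd : ∀ k : ℕ, 1 ≤ k →
      γ (k + 1) = min (adaSafe f' x γ 1 k) (1 / ck f' x k))
    (k : ℕ) (hk : 1 ≤ k) (hys : 0 < ⟪yk f' x k, sk x k⟫) :
    γ k ≤ γ (k + 1) ∨ 2 / ck f' x k ≤ γ k ∨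
      (γ (k + 1) ≤ γ k ∧ γ (k + 1) = 1 / ck f' x k) := by
  rcases le_or_gt (γ k) (γ (k + 1)) with hgrow | hshrink
  · exact Or.inl hgrow
  rcases le_total (adaSafe f' x γ 1 k) (1 / ck f' x k) with hsafe | hbb
  · rw [hupd k hk, min_eq_left hsafe] at hshrink
    obtain ⟨hB, heq⟩ := adaSafe_eq_of_lt_of_le_adaT1
      (le_adaT1 one_pos le_rfl (hγ k).le (hγ (k - 1)).le) hshrink
    rw [adaBrk_one_eq hys.ne'] at hB heq
    rw [heq] at hsafe
    exact Or.inr <| Or.inl <| two_div_le_of_div_sqrt_le (hγ k) (norm_sq_div_real_inner_pos hys)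
      (real_inner_div_norm_sq_pos hys).le (real_inner_div_norm_sq_le_norm_sq_div_inner hys) hB hsafe
  · exact Or.inr <| Or.inr ⟨hshrink.le, (hupd k hk).trans (min_eq_right hbb)⟩

/-- for the short-BB-safeguarded update
`γ_{k+1} = min{γ^safe_{k+1}, 1/c_k}` (with `r = 1`), at any `k ≥ 1` with
`⟨y^k, s^k⟩ > 0`: either `γ_{k+1} ≥ γ_k`, or `γ_k ≥ 2/c_k`, or
`γ_k ≥ γ_{k+1} = 1/c_k`. -/
theorem statement_16 {n : ℕ} (f : En n → ℝ) (f' : En n → En n) (g : En n → EReal)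
    (hfconv : ConvexOn ℝ Set.univ f)
    (hf' : ∀ z, HasGradientAt f (f' z) z)
    (hgproper : ERProper g) (hglsc : LowerSemicontinuous g) (hgconv : ERConvex g)
    (hargmin : ∃ p, IsArgmin f g p)
    (γ : ℕ → ℝ) (hγ : ∀ k, 0 < γ k)
    (x : ℕ → En n) (hx : PGSeq f' g γ x)
    (hxne : ∀ k : ℕ, 1 ≤ k → x k ≠ x (k - 1))
    (hupd : ∀ k : ℕ, 1 ≤ k →
      γ (k + 1) = min (adaSafe f' x γ 1 k) (1 / ck f' x k))
    (k : ℕ) (hk : 1 ≤ k) (hys : 0 < ⟪yk f' x k, sk x k⟫) :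
    γ k ≤ γ (k + 1) ∨ 2 / ck f' x k ≤ γ k ∨
      (γ (k + 1) ≤ γ k ∧ γ (k + 1) = 1 / ck f' x k) :=
  statement_16_general f' γ hγ x hupd k hk hys

end
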